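/- For any polynomials f, g ∈ F_q[t], if g ≤ f (that is, δ(g) ≤ δ(f)), then g! divides f!. -/

import Mathlib

set_option linter.unusedSectionVars false
set_option linter.unusedVariables false
set_option maxHeartbeats 1000000


open Polynomial

variable {F : Type*} [Field F] [Fintype F] [DecidableEq F]

/-- `delta a f` is the natural number attached to the polynomial `f` via the
enumeration `a : Fin q ≃ F` of the field (`q = Fintype.card F`): if
`f = a_{i_0} + a_{i_1} t + ⋯ + a_{i_n} t^n` then `delta a f = i_0 + i_1 q + ⋯ + i_n q^n`.
In particular `delta a 0 = 0` whenever `a 0 = 0`. -/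
noncomputable def delta (a : Fin (Fintype.card F) ≃ F) (f : F[X]) : ℕ :=
  ∑ j ∈ Finset.range (f.natDegree + 1), (a.symm (f.coeff j) : ℕ) * Fintype.card F ^ j

/-- The inverse of `delta`: the polynomial whose `j`-th coefficient is the `j`-th
base-`q` digit of `m` (under the enumeration `a`). -/
noncomputable def deltaInv (a : Fin (Fintype.card F) ≃ F) (m : ℕ) : F[X] :=
  ∑ j ∈ Finset.range (m + 1),
    C (a ⟨m / Fintype.card F ^ j % Fintype.card F, Nat.mod_lt _ Fintype.card_pos⟩) * X ^ j

/-- The factorial of a polynomial: `f! = ∏_{g < f} (f - g)`, the product over all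
polynomials `g` with `delta a g < delta a f`; in particular `0! = 1`. -/
noncomputable def pfact (a : Fin (Fintype.card F) ≃ F) (f : F[X]) : F[X] :=
  ∏ m ∈ Finset.range (delta a f), (f - deltaInv a m)

/-- The Smarandache function: `S a 0 = 0`, and for `f ≠ 0`, `S a f` is the smallest
polynomial `g` (in the order given by `delta`) such that `f ∣ g!`. -/
noncomputable def S (a : Fin (Fintype.card F) ≃ F) (f : F[X]) : F[X] :=
  if f = 0 then 0 else deltaInv a (sInf {m : ℕ | f ∣ pfact a (deltaInv a m)})


section PfactAuxSec
open Polynomial Finset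
namespace PfactAux

variable {q : ℕ}

lemma sum_digits_lt (hq : 0 < q) (d : ℕ → ℕ) (hd : ∀ j, d j < q) (k : ℕ) :
    ∑ j ∈ range k, d j * q ^ j < q ^ k := by
  induction k with
  | zero => simp
  | succ k ih =>
    rw [sum_range_succ, pow_succ]
    have h1 : (d k + 1) * q ^ k ≤ q * q ^ k :=
      Nat.mul_le_mul_right _ (hd k)
    nlinarith [ih]

lemma digits_reconstruct (hq : 1 < q) : ∀ n m, m < q ^ n →
    ∑ j ∈ range n, m / q ^ j % q * q ^ j = m := by
  intro n
  induction n with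
  | zero => intro m hm; simp at hm ⊢; omega
  | succ n ih =>
    intro m hm
    rw [Finset.sum_range_succ']
    have e : ∀ j, m / q ^ (j + 1) % q * q ^ (j + 1) = q * (m / q / q ^ j % q * q ^ j) := by
      intro j
      rw [Nat.div_div_eq_div_mul, ← pow_succ']
      ring
    simp only [e, ← Finset.mul_sum]
    have hmq : m / q < q ^ n := by
      rw [Nat.div_lt_iff_lt_mul (by omega)]
      calc m < q ^ (n+1) := hm
        _ = q ^ n * q := by ring
    rw [ih (m / q) hmq]
    simp [Nat.div_add_mod]

lemma digit_extract (hq : 1 < q) (d : ℕ → ℕ) (hd : ∀ j, d j < q) (n k : ℕ) :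
    (∑ j ∈ range n, d j * q ^ j) / q ^ k % q = if k < n then d k else 0 := by
  have hq0 : 0 < q := by omega
  by_cases hk : k < n
  · rw [if_pos hk]
    rw [← Finset.sum_range_add_sum_Ico _ (le_of_lt hk)]
    rw [Finset.sum_Ico_eq_sum_range]
    have e : ∀ i, d (k + i) * q ^ (k + i) = d (k + i) * q ^ i * q ^ k := by
      intro i; rw [pow_add]; ring
    simp only [e, ← Finset.sum_mul]
    rw [Nat.add_mul_div_right _ _ (pow_pos hq0 k)]
    rw [Nat.div_eq_of_lt (sum_digits_lt hq0 d hd k), zero_add]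
    -- now (∑ i ∈ range (n - k), d (k + i) * q ^ i) % q = d k
    have hnk : n - k = (n - k - 1) + 1 := by omega
    rw [hnk, Finset.sum_range_succ']
    simp only [pow_succ']
    have e2 : ∀ i, d (k + (i + 1)) * (q * q ^ i) = d (k + (i+1)) * q ^ i * q := by
      intro i; ring
    simp only [e2, ← Finset.sum_mul]
    simp only [add_zero, pow_zero, mul_one]
    rw [add_comm, Nat.add_mul_mod_self_right, Nat.mod_eq_of_lt (hd k)]
  · rw [if_neg hk]
    have : (∑ j ∈ range n, d j * q ^ j) < q ^ k :=
      lt_of_lt_of_le (sum_digits_lt hq0 d hd n) (Nat.pow_le_pow_right (by omega) (by omega))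
    rw [Nat.div_eq_of_lt this]
    simp

lemma dig_high (hq : 0 < q) {M j : ℕ} (hj : M ≤ j) (m : ℕ) :
    m / q ^ j = m / q ^ M / q ^ (j - M) := by
  rw [Nat.div_div_eq_div_mul, ← pow_add]
  congr 2
  omega

lemma dig_low_add (hq : 0 < q) {M j : ℕ} (hj : j < M) (k s : ℕ) :
    (k * q ^ M + s) / q ^ j % q = s / q ^ j % q := by
  have e : k * q ^ M = k * q ^ (M - j - 1) * q * q ^ j := by
    rw [mul_assoc, mul_assoc, ← pow_succ', ← pow_add]
    congr 2
    omega
  rw [e, add_comm, Nat.add_mul_div_right _ _ (pow_pos hq j)]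
  rw [Nat.add_mul_mod_self_right]


end PfactAux
end PfactAuxSec

section Poly

variable (a : Fin (Fintype.card F) ≃ F)

lemma hq1 : 1 < Fintype.card F := Fintype.one_lt_card

lemma symm_zero (h0 : a 0 = 0) : ((a.symm 0 : Fin (Fintype.card F)) : ℕ) = 0 := by
  rw [← h0, Equiv.symm_apply_apply]
  rfl

lemma a_mk_eq_zero' (a : Fin (Fintype.card F) ≃ F) : True := trivial

lemma a_mk_zero (h0 : a 0 = 0) (h : 0 < Fintype.card F) :
    a ⟨0, h⟩ = 0 := by
  rw [← h0]
  congr 1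

lemma a_mk_eq_zero (h0 : a 0 = 0) {x : ℕ} (hlt : x < Fintype.card F) (hx : x = 0) :
    a ⟨x, hlt⟩ = 0 := by
  subst hx
  exact a_mk_zero a h0 hlt

lemma delta_eq_sum (h0 : a 0 = 0) (f : F[X]) {n : ℕ} (hn : f.natDegree + 1 ≤ n) :
    delta a f = ∑ j ∈ Finset.range n, (a.symm (f.coeff j) : ℕ) * Fintype.card F ^ j := by
  unfold delta
  apply Finset.sum_subset (Finset.range_subset_range.mpr hn)
  intro j hj hj'
  simp only [Finset.mem_range, not_lt] at hj'
  rw [coeff_eq_zero_of_natDegree_lt (by omega), symm_zero a h0, zero_mul]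

lemma dig_delta (h0 : a 0 = 0) (f : F[X]) (j : ℕ) :
    delta a f / Fintype.card F ^ j % Fintype.card F = ((a.symm (f.coeff j) : Fin _) : ℕ) := by
  set n := max (f.natDegree + 1) (j + 1) with hn
  rw [delta_eq_sum a h0 f (le_max_left (f.natDegree + 1) (j + 1))]
  rw [PfactAux.digit_extract (hq1) (fun j => ((a.symm (f.coeff j) : Fin _) : ℕ))
    (fun j => Fin.is_lt _) n j, if_pos (by omega)]

lemma delta_injective (h0 : a 0 = 0) {f g : F[X]} (h : delta a f = delta a g) : f = g := by
  ext j
  have := dig_delta a h0 f j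
  rw [h, dig_delta a h0 g j] at this
  have h2 : a.symm (f.coeff j) = a.symm (g.coeff j) := Fin.ext this.symm
  exact a.symm.injective h2

lemma coeff_deltaInv (h0 : a 0 = 0) (m j : ℕ) :
    (deltaInv a m).coeff j
      = a ⟨m / Fintype.card F ^ j % Fintype.card F, Nat.mod_lt _ Fintype.card_pos⟩ := by
  unfold deltaInv
  rw [finset_sum_coeff]
  simp only [coeff_C_mul, coeff_X_pow, mul_ite, mul_one, mul_zero]
  rw [Finset.sum_ite_eq (Finset.range (m + 1)) j]
  by_cases hj : j ∈ Finset.range (m + 1)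
  · rw [if_pos hj]
  · rw [if_neg hj]
    simp only [Finset.mem_range, not_lt] at hj
    have hm : m < Fintype.card F ^ j := by
      calc m < 2 ^ j := by
            have := Nat.lt_two_pow_self (n := j)
            omega
        _ ≤ Fintype.card F ^ j := Nat.pow_le_pow_left (hq1) j
    exact (a_mk_eq_zero a h0 _ (by rw [Nat.div_eq_of_lt hm, Nat.zero_mod])).symm

lemma delta_lt_pow (h0 : a 0 = 0) {f : F[X]} {n : ℕ} (hn : f.natDegree < n) :
    delta a f < Fintype.card F ^ n := by
  rw [delta_eq_sum a h0 f (by omega : f.natDegree + 1 ≤ n)]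
  exact PfactAux.sum_digits_lt (by have := hq1 (F := F); omega) _ (fun j => Fin.is_lt _) n

lemma delta_deltaInv (h0 : a 0 = 0) (m : ℕ) : delta a (deltaInv a m) = m := by
  set n := max ((deltaInv a m).natDegree + 1) (m + 1) with hn
  rw [delta_eq_sum a h0 _ (le_max_left _ _)]
  have e : ∀ j, ((a.symm ((deltaInv a m).coeff j) : Fin _) : ℕ)
      = m / Fintype.card F ^ j % Fintype.card F := by
    intro j
    rw [coeff_deltaInv a h0 m j, Equiv.symm_apply_apply]
  simp only [e]
  refine PfactAux.digits_reconstruct (hq1) n m ?_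
  calc m < 2 ^ m := Nat.lt_two_pow_self
    _ ≤ Fintype.card F ^ m := Nat.pow_le_pow_left (hq1) m
    _ ≤ Fintype.card F ^ n := Nat.pow_le_pow_right (by have := hq1 (F := F); omega) (by omega)

lemma deltaInv_delta (h0 : a 0 = 0) (g : F[X]) : deltaInv a (delta a g) = g := by
  ext j
  rw [coeff_deltaInv a h0 _ j]
  have := dig_delta a h0 g j
  have h2 : (⟨delta a g / Fintype.card F ^ j % Fintype.card F, Nat.mod_lt _ Fintype.card_pos⟩
      : Fin (Fintype.card F)) = a.symm (g.coeff j) := Fin.ext this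
  rw [h2, Equiv.apply_symm_apply]

lemma delta_zero (h0 : a 0 = 0) : delta a (0 : F[X]) = 0 := by
  unfold delta
  simp [symm_zero a h0]

lemma deltaInv_zero (h0 : a 0 = 0) : deltaInv a 0 = (0 : F[X]) := by
  have := deltaInv_delta a h0 (0 : F[X])
  rwa [delta_zero a h0] at this

lemma delta_eq_zero (h0 : a 0 = 0) {x : F[X]} (hx : delta a x = 0) : x = 0 := by
  have := deltaInv_delta a h0 x
  rw [hx, deltaInv_zero a h0] at this
  exact this.symm

lemma natDegree_deltaInv_lt (h0 : a 0 = 0) {m n : ℕ} (hm : m < Fintype.card F ^ n)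
    (hn : 0 < n) : (deltaInv a m).natDegree < n := by
  have : (deltaInv a m).natDegree ≤ n - 1 := by
    rw [natDegree_le_iff_coeff_eq_zero]
    intro N hN
    rw [coeff_deltaInv a h0 m N]
    have hlt : m < Fintype.card F ^ N :=
      lt_of_lt_of_le hm (Nat.pow_le_pow_right (by have := hq1 (F := F); omega) (by omega))
    exact a_mk_eq_zero a h0 _ (by rw [Nat.div_eq_of_lt hlt, Nat.zero_mod])
  omega

lemma natDegree_deltaInv_le_self (h0 : a 0 = 0) (m : ℕ) :
    (deltaInv a m).natDegree ≤ m := by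
  rcases Nat.eq_zero_or_pos m with hm | hm
  · subst hm; rw [deltaInv_zero a h0]; simp
  · have : m < Fintype.card F ^ m :=
      lt_of_lt_of_le Nat.lt_two_pow_self (Nat.pow_le_pow_left (hq1) m)
    exact le_of_lt (natDegree_deltaInv_lt a h0 this hm)

lemma deltaInv_split (h0 : a 0 = 0) {M k s : ℕ} (hs : s < Fintype.card F ^ M) :
    deltaInv a (k * Fintype.card F ^ M + s)
      = deltaInv a (k * Fintype.card F ^ M) + deltaInv a s := by
  have hq0 : 0 < Fintype.card F := Fintype.card_pos
  ext j
  rw [coeff_add, coeff_deltaInv a h0, coeff_deltaInv a h0, coeff_deltaInv a h0]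
  by_cases hj : j < M
  · have hkQ : k * Fintype.card F ^ M / Fintype.card F ^ j % Fintype.card F = 0 := by
      have := PfactAux.dig_low_add hq0 hj k 0
      simpa using this
    have hsum : (k * Fintype.card F ^ M + s) / Fintype.card F ^ j % Fintype.card F
        = s / Fintype.card F ^ j % Fintype.card F := PfactAux.dig_low_add hq0 hj k s
    have e1 : a ⟨k * Fintype.card F ^ M / Fintype.card F ^ j % Fintype.card F,
        Nat.mod_lt _ Fintype.card_pos⟩ = 0 := a_mk_eq_zero a h0 _ hkQ
    rw [e1, zero_add]
    congr 1
    exact Fin.ext hsum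
  · push_neg at hj
    have hsz : s / Fintype.card F ^ j = 0 :=
      Nat.div_eq_of_lt (lt_of_lt_of_le hs (Nat.pow_le_pow_right (by omega) hj))
    have e2 : a ⟨s / Fintype.card F ^ j % Fintype.card F, Nat.mod_lt _ Fintype.card_pos⟩ = 0 :=
      a_mk_eq_zero a h0 _ (by rw [hsz, Nat.zero_mod])
    rw [e2, add_zero]
    congr 1
    apply Fin.ext
    show (k * Fintype.card F ^ M + s) / Fintype.card F ^ j % Fintype.card F
      = k * Fintype.card F ^ M / Fintype.card F ^ j % Fintype.card F
    rw [PfactAux.dig_high hq0 hj, PfactAux.dig_high hq0 hj (k * Fintype.card F ^ M)]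
    congr 2
    rw [Nat.mul_div_cancel (H := pow_pos hq0 M)]
    · rw [add_comm, Nat.add_mul_div_right _ _ (pow_pos hq0 M),
        Nat.div_eq_of_lt hs, zero_add]


lemma coeff_high_eq (h0 : a 0 = 0) {M : ℕ} {m m' : ℕ}
    (hmm : m / Fintype.card F ^ M = m' / Fintype.card F ^ M) {j : ℕ} (hj : M ≤ j) :
    (deltaInv a m).coeff j = (deltaInv a m').coeff j := by
  rw [coeff_deltaInv a h0, coeff_deltaInv a h0]
  congr 1
  apply Fin.ext
  show m / Fintype.card F ^ j % Fintype.card F = m' / Fintype.card F ^ j % Fintype.card F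
  rw [PfactAux.dig_high Fintype.card_pos hj, PfactAux.dig_high Fintype.card_pos hj, hmm]

lemma natDegree_lt_of_coeff_high_zero {x : F[X]} {M : ℕ} (hM : 0 < M)
    (hx : ∀ j, M ≤ j → x.coeff j = 0) : x.natDegree < M := by
  have : x.natDegree ≤ M - 1 := by
    rw [natDegree_le_iff_coeff_eq_zero]
    intro N hN
    exact hx N (by omega)
  omega

open scoped Classical in
lemma count_key (h0 : a 0 = 0) (π : F[X]) (hπ : π.Monic) (hd : 0 < π.natDegree) (f : F[X]) :
    ((Finset.range (delta a f)).filter fun m => π ∣ f - deltaInv a m).card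
      = delta a f / Fintype.card F ^ π.natDegree := by
  classical
  have hq0 : 0 < Fintype.card F := Fintype.card_pos
  set M := π.natDegree with hM
  set Q := Fintype.card F ^ M with hQdef
  have hQ0 : 0 < Q := pow_pos hq0 M
  set N := delta a f with hN
  -- f = deltaInv a N
  have hfN : f = deltaInv a N := (deltaInv_delta a h0 f).symm
  rw [← Finset.card_range (N / Q)]
  apply Finset.card_bij (fun m _ => m / Q)
  · -- maps into range (N / Q)
    intro m hm
    simp only [Finset.mem_filter, Finset.mem_range] at hm
    obtain ⟨hmN, hdvd⟩ := hm
    rw [Finset.mem_range]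
    have hle : m / Q ≤ N / Q := Nat.div_le_div_right (le_of_lt hmN)
    rcases lt_or_eq_of_le hle with h | h
    · exact h
    · exfalso
      have hne : f - deltaInv a m ≠ 0 := by
        intro hzero
        have : f = deltaInv a m := by linear_combination (norm := ring_nf) hzero
        have : N = m := by rw [hN, this, delta_deltaInv a h0]
        omega
      have hcoeff : ∀ j, M ≤ j → (f - deltaInv a m).coeff j = 0 := by
        intro j hj
        rw [coeff_sub]
        rw [hfN] at *
        rw [coeff_high_eq a h0 h.symm hj]
        ring
      have hdeg : (f - deltaInv a m).natDegree < M :=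
        natDegree_lt_of_coeff_high_zero hd hcoeff
      have := Polynomial.natDegree_le_of_dvd hdvd hne
      omega
  · -- injective
    intro m hm m' hm' hmm
    simp only [Finset.mem_filter, Finset.mem_range] at hm hm'
    have hdvd : π ∣ deltaInv a m' - deltaInv a m := by
      have : deltaInv a m' - deltaInv a m = (f - deltaInv a m) - (f - deltaInv a m') := by ring
      rw [this]
      exact dvd_sub hm.2 hm'.2
    have hcoeff : ∀ j, M ≤ j → (deltaInv a m' - deltaInv a m).coeff j = 0 := by
      intro j hj
      rw [coeff_sub, coeff_high_eq a h0 hmm.symm hj]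
      ring
    have heq : deltaInv a m' = deltaInv a m := by
      by_contra hne
      have h1 : (deltaInv a m' - deltaInv a m).natDegree < M :=
        natDegree_lt_of_coeff_high_zero hd hcoeff
      have h2 := Polynomial.natDegree_le_of_dvd hdvd (sub_ne_zero_of_ne hne)
      omega
    have := delta_deltaInv a h0 m
    rw [← heq, delta_deltaInv a h0 m'] at this
    omega
  · -- surjective
    intro k hk
    rw [Finset.mem_range] at hk
    set x₀ := f - deltaInv a (k * Q) with hx₀
    have hremdeg : ∀ y : F[X], ((y %ₘ π).natDegree) < M := by
      intro y
      rcases eq_or_ne (y %ₘ π) 0 with hy | hy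
      · rw [hy]; simpa using hd
      · have := Polynomial.degree_modByMonic_lt y hπ
        rw [Polynomial.degree_eq_natDegree hπ.ne_zero] at this
        exact_mod_cast (Polynomial.natDegree_lt_iff_degree_lt hy).mpr this
    have hrem : ∀ y : F[X], delta a (y %ₘ π) < Q :=
      fun y => delta_lt_pow a h0 (hremdeg y)
    set φ : Fin Q → Fin Q := fun s => ⟨delta a ((x₀ - deltaInv a s.val) %ₘ π), hrem _⟩ with hφ
    have hinj : Function.Injective φ := by
      intro s s' hss
      have heq : (x₀ - deltaInv a s.val) %ₘ π = (x₀ - deltaInv a s'.val) %ₘ π := by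
        apply delta_injective a h0
        exact congrArg Fin.val hss
      have hdvd : π ∣ deltaInv a s'.val - deltaInv a s.val := by
        rw [← Polynomial.modByMonic_eq_zero_iff_dvd hπ]
        have e : deltaInv a s'.val - deltaInv a s.val
            = (x₀ - deltaInv a s.val) - (x₀ - deltaInv a s'.val) := by ring
        rw [e, Polynomial.sub_modByMonic, heq, sub_self]
      have hs : (deltaInv a s.val).natDegree < M := natDegree_deltaInv_lt a h0 s.isLt hd
      have hs' : (deltaInv a s'.val).natDegree < M := natDegree_deltaInv_lt a h0 s'.isLt hd
      have heq2 : deltaInv a s'.val = deltaInv a s.val := by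
        by_contra hne
        have h1 : (deltaInv a s'.val - deltaInv a s.val).natDegree < M := by
          calc (deltaInv a s'.val - deltaInv a s.val).natDegree
              ≤ max (deltaInv a s'.val).natDegree (deltaInv a s.val).natDegree :=
                Polynomial.natDegree_sub_le _ _
            _ < M := by omega
        have h2 := Polynomial.natDegree_le_of_dvd hdvd (sub_ne_zero_of_ne hne)
        omega
      apply Fin.ext
      have := delta_deltaInv a h0 s.val
      rw [← heq2, delta_deltaInv a h0 s'.val] at this
      omega
    have hsurj : Function.Surjective φ := Finite.surjective_of_injective hinj
    obtain ⟨s, hs⟩ := hsurj ⟨0, hQ0⟩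
    have hrem0 : (x₀ - deltaInv a s.val) %ₘ π = 0 := by
      apply delta_eq_zero a h0
      exact congrArg Fin.val hs
    have hdvd : π ∣ f - deltaInv a (k * Q + s.val) := by
      rw [deltaInv_split a h0 s.isLt]
      rw [← Polynomial.modByMonic_eq_zero_iff_dvd hπ] at *
      have e : f - (deltaInv a (k * Q) + deltaInv a s.val) = x₀ - deltaInv a s.val := by
        rw [hx₀]; ring
      rw [e, hrem0]
    refine ⟨k * Q + s.val, ?_, ?_⟩
    · simp only [Finset.mem_filter, Finset.mem_range]
      constructor
      · have h1 : k + 1 ≤ N / Q := hk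
        calc k * Q + s.val < (k + 1) * Q := by have := s.isLt; nlinarith
          _ ≤ N / Q * Q := Nat.mul_le_mul_right _ h1
          _ ≤ N := Nat.div_mul_le_self N Q
      · exact hdvd
    · rw [add_comm, Nat.add_mul_div_right _ _ hQ0, Nat.div_eq_of_lt s.isLt, zero_add]

open UniqueFactorizationMonoid in
lemma count_nf_prod {ι : Type*} (p : F[X]) (s : Finset ι) (G : ι → F[X])
    (hG : ∀ i ∈ s, G i ≠ 0) [DecidableEq F[X]] :
    Multiset.count p (normalizedFactors (∏ i ∈ s, G i))
      = ∑ i ∈ s, Multiset.count p (normalizedFactors (G i)) := by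
  classical
  induction s using Finset.induction_on with
  | empty => simp [normalizedFactors_one]
  | insert i t hnotmem ih =>
    rw [Finset.prod_insert hnotmem, Finset.sum_insert hnotmem]
    rw [normalizedFactors_mul (hG i (Finset.mem_insert_self i t))
      (Finset.prod_ne_zero_iff.mpr fun j hj => hG j (Finset.mem_insert_of_mem hj))]
    rw [Multiset.count_add, ih (fun j hj => hG j (Finset.mem_insert_of_mem hj))]

open UniqueFactorizationMonoid in
open scoped Classical in
lemma count_nf_eq_card [DecidableEq F[X]] (p : F[X]) (hp : Prime p) (hmo : p.Monic)
    (x : F[X]) (hx : x ≠ 0) (B : ℕ) (hB : x.natDegree < B) :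
    Multiset.count p (normalizedFactors x)
      = ((Finset.range B).filter fun j => p ^ (j + 1) ∣ x).card := by
  classical
  have hirr : Irreducible p := hp.irreducible
  have hdpos : 0 < p.natDegree := hirr.natDegree_pos
  have hcount : ∀ n : ℕ, p ^ n ∣ x ↔ (n : ℕ∞) ≤ Multiset.count p (normalizedFactors x) := by
    intro n
    rw [pow_dvd_iff_le_emultiplicity,
      emultiplicity_eq_count_normalizedFactors hirr hx, hmo.normalize_eq_self]
  set c := Multiset.count p (normalizedFactors x) with hc
  have hcB : c ≤ B := by
    have h1 : p ^ c ∣ x := (hcount c).mpr le_rfl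
    have h2 := Polynomial.natDegree_le_of_dvd h1 hx
    rw [hmo.natDegree_pow] at h2
    have : c ≤ c * p.natDegree := Nat.le_mul_of_pos_right c hdpos
    omega
  have hfilter : (Finset.range B).filter (fun j => p ^ (j + 1) ∣ x) = Finset.range c := by
    ext j
    simp only [Finset.mem_filter, Finset.mem_range]
    rw [hcount (j + 1)]
    constructor
    · rintro ⟨hjB, hj⟩
      exact_mod_cast by exact_mod_cast Nat.lt_of_lt_of_le (by exact_mod_cast Nat.lt_succ_self j) (by exact_mod_cast hj)
    · intro hj
      exact ⟨by omega, by exact_mod_cast Nat.succ_le_of_lt hj⟩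
  rw [hfilter, Finset.card_range]

open UniqueFactorizationMonoid in
lemma count_nf_pfact [DecidableEq F[X]] (h0 : a 0 = 0) (p : F[X]) (hp : Prime p)
    (hmo : p.Monic) (f : F[X]) (B : ℕ)
    (hB : ∀ m, m < delta a f → (f - deltaInv a m).natDegree < B) :
    Multiset.count p (normalizedFactors (pfact a f))
      = ∑ j ∈ Finset.range B, delta a f / Fintype.card F ^ ((j + 1) * p.natDegree) := by
  classical
  have hdpos : 0 < p.natDegree := hp.irreducible.natDegree_pos
  have hne : ∀ m ∈ Finset.range (delta a f), f - deltaInv a m ≠ 0 := by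
    intro m hm hzero
    rw [Finset.mem_range] at hm
    have : f = deltaInv a m := by linear_combination (norm := ring_nf) hzero
    have : delta a f = m := by rw [this, delta_deltaInv a h0]
    omega
  rw [pfact, count_nf_prod p _ _ hne]
  have e : ∀ m ∈ Finset.range (delta a f),
      Multiset.count p (normalizedFactors (f - deltaInv a m))
        = ((Finset.range B).filter fun j => p ^ (j + 1) ∣ f - deltaInv a m).card := by
    intro m hm
    rw [Finset.mem_range] at hm
    exact count_nf_eq_card p hp hmo _ (hne m (Finset.mem_range.mpr hm)) B (hB m hm)
  rw [Finset.sum_congr rfl e]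
  simp only [Finset.card_filter]
  rw [Finset.sum_comm]
  apply Finset.sum_congr rfl
  intro j _
  rw [← Finset.card_filter]
  have hπ : (p ^ (j + 1)).Monic := hmo.pow _
  have hπd : 0 < (p ^ (j + 1)).natDegree := by
    rw [hmo.natDegree_pow]
    positivity
  have := count_key a h0 (p ^ (j + 1)) hπ hπd f
  rw [hmo.natDegree_pow] at this
  convert this using 2

lemma pfact_ne_zero (h0 : a 0 = 0) (f : F[X]) : pfact a f ≠ 0 := by
  rw [pfact]
  rw [Finset.prod_ne_zero_iff]
  intro m hm hzero
  rw [Finset.mem_range] at hm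
  have : f = deltaInv a m := by linear_combination (norm := ring_nf) hzero
  have : delta a f = m := by rw [this, delta_deltaInv a h0]
  omega

lemma natDegree_sub_deltaInv_le (h0 : a 0 = 0) (f : F[X]) (m : ℕ) :
    (f - deltaInv a m).natDegree ≤ f.natDegree + m := by
  calc (f - deltaInv a m).natDegree
      ≤ max f.natDegree (deltaInv a m).natDegree := Polynomial.natDegree_sub_le _ _
    _ ≤ f.natDegree + m := by
        have := natDegree_deltaInv_le_self a h0 m
        omega

theorem pfact_dvd_pfact' (h0 : a 0 = 0)
    (f g : F[X]) (h : delta a g ≤ delta a f) :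
    pfact a g ∣ pfact a f := by
  classical
  have hg0 : pfact a g ≠ 0 := pfact_ne_zero a h0 g
  have hf0 : pfact a f ≠ 0 := pfact_ne_zero a h0 f
  apply (UniqueFactorizationMonoid.dvd_iff_normalizedFactors_le_normalizedFactors hg0 hf0).mpr
  rw [Multiset.le_iff_count]
  intro p
  by_cases hmem : p ∈ UniqueFactorizationMonoid.normalizedFactors (pfact a g)
  · have hp := UniqueFactorizationMonoid.prime_of_normalized_factor p hmem
    have hnorm := UniqueFactorizationMonoid.normalize_normalized_factor p hmem
    have hmo : p.Monic := by
      rw [← hnorm]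
      exact Polynomial.monic_normalize hp.ne_zero
    set B := f.natDegree + g.natDegree + delta a f + 1 with hB
    have hBg : ∀ m, m < delta a g → (g - deltaInv a m).natDegree < B := by
      intro m hm
      have := natDegree_sub_deltaInv_le a h0 g m
      omega
    have hBf : ∀ m, m < delta a f → (f - deltaInv a m).natDegree < B := by
      intro m hm
      have := natDegree_sub_deltaInv_le a h0 f m
      omega
    rw [count_nf_pfact a h0 p hp hmo g B hBg, count_nf_pfact a h0 p hp hmo f B hBf]
    exact Finset.sum_le_sum fun j _ => Nat.div_le_div_right h
  · rw [Multiset.count_eq_zero_of_notMem hmem]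
    omega

end Poly

/-- Corollary 2.3: if `g ≤ f` (i.e. `delta g ≤ delta f`) then `g! ∣ f!`. -/
theorem pfact_dvd_pfact (a : Fin (Fintype.card F) ≃ F) (h0 : a 0 = 0) (h1 : a 1 = 1)
    (f g : F[X]) (h : delta a g ≤ delta a f) :
    pfact a g ∣ pfact a f := pfact_dvd_pfact' a h0 f g h
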